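/- arXiv:2603.07241 — 2 statements merged into one kernel-verified Lean document; each statement's English description precedes it below -/
import Mathlib

section
/- Let A and O be finite nonempty types. Let ν be a probability mass function on O (the distribution of observations), let π be a probability mass function on A (the prior) with π(a) > 0 for all a, let Δmax ≥ 0, and for each o ∈ O let λ(o) ∈ [0,1] (the relevance probability) and let μ₀(o) and μ₁(o) be probability mass functions on A (the relevance-conditioned posteriors). Define the posterior μ(o) pointwise by μ(o)(a) = λ(o)·μ₁(o)(a) + (1 − λ(o))·μ₀(o)(a). Assume: (i) for every o ∈ O, μ₀(o) = π (the irrelevant-observation posterior produces no posterior shift, i.e. D(μ₀(o) ‖ π) = 0); and (ii) for every o ∈ O with λ(o) > 0, D(μ₁(o) ‖ π) ≤ Δmax. Then the expected information gain in KL form is bounded by the expected relevance: ∑_{o ∈ O} ν(o) · D(μ(o) ‖ π) ≤ Δmax · ∑_{o ∈ O} ν(o) · λ(o). -/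
open scoped BigOperators

/-!
Mixing a posterior `p` with the prior `q` in proportions `l : 1 - l` scales its divergence
from `q` by at most `l`: this is the convexity of `x ↦ x log x` between the likelihood ratio
`p / q` and `1`, where `1 log 1 = 0`. With the irrelevant posterior equal to the prior, each
observation therefore contributes at most `λ(o) Δmax`, and averaging over `ν` gives the bound.
-/

/-- Kullback–Leibler divergence `D(P ‖ Q) = ∑ a, P a * log (P a / Q a)` on a finite type,
with the convention `0 * log 0 = 0` (automatic since `0 * x = 0`). -/
noncomputable def klDiv {A : Type*} [Fintype A] (P Q : A → ℝ) : ℝ :=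
  ∑ a, P a * Real.log (P a / Q a)

lemma mul_log_div_mix_le {p q l : ℝ} (hp : 0 ≤ p) (hq : 0 ≤ q) (hl0 : 0 ≤ l) (hl1 : l ≤ 1) :
    (l * p + (1 - l) * q) * Real.log ((l * p + (1 - l) * q) / q) ≤
      l * (p * Real.log (p / q)) := by
  rcases hq.eq_or_lt with rfl | hq
  · simp -- both sides vanish: `x / 0 = 0` and `log 0 = 0`
  have hconv := Real.convexOn_mul_log.2 (Set.mem_Ici.2 (div_nonneg hp hq.le))
    (Set.mem_Ici.2 zero_le_one) hl0 (sub_nonneg.2 hl1) (add_sub_cancel l 1)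
  simp only [smul_eq_mul, Real.log_one, mul_zero, mul_one, add_zero] at hconv
  have hratio : (l * p + (1 - l) * q) / q = l * (p / q) + (1 - l) := by
    field_simp
  calc (l * p + (1 - l) * q) * Real.log ((l * p + (1 - l) * q) / q)
      = q * ((l * (p / q) + (1 - l)) * Real.log (l * (p / q) + (1 - l))) := by
        rw [hratio]; field_simp
    _ ≤ q * (l * (p / q * Real.log (p / q))) := mul_le_mul_of_nonneg_left hconv hq.le
    _ = l * (p * Real.log (p / q)) := by field_simp

lemma klDiv_mix_le {A : Type*} [Fintype A] {p q : A → ℝ} (hp : ∀ a, 0 ≤ p a)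
    (hq : ∀ a, 0 ≤ q a) {l : ℝ} (hl0 : 0 ≤ l) (hl1 : l ≤ 1) :
    klDiv (fun a => l * p a + (1 - l) * q a) q ≤ l * klDiv p q := by
  rw [klDiv, klDiv, Finset.mul_sum]
  exact Finset.sum_le_sum fun a _ => mul_log_div_mix_le (hp a) (hq a) hl0 hl1

lemma klDiv_mix_le_mul {A : Type*} [Fintype A] {p q : A → ℝ} (hp : ∀ a, 0 ≤ p a)
    (hq : ∀ a, 0 ≤ q a) {l Δ : ℝ} (hl0 : 0 ≤ l) (hl1 : l ≤ 1) (hpq : 0 < l → klDiv p q ≤ Δ) :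
    klDiv (fun a => l * p a + (1 - l) * q a) q ≤ l * Δ := by
  refine (klDiv_mix_le hp hq hl0 hl1).trans ?_
  rcases hl0.eq_or_lt with rfl | hl
  · simp
  · exact mul_le_mul_of_nonneg_left (hpq hl) hl0

theorem eig_upper_bound_via_relevance_general
    {A O : Type*} [Fintype A] [Fintype O]
    (ν : O → ℝ) (hν0 : ∀ o, 0 ≤ ν o)
    (π : A → ℝ) (hπ0 : ∀ a, 0 < π a)
    (Δmax : ℝ)
    (lam : O → ℝ) (hlam0 : ∀ o, 0 ≤ lam o) (hlam1 : ∀ o, lam o ≤ 1)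
    (μ₀ μ₁ : O → A → ℝ)
    (hμ₁0 : ∀ o a, 0 ≤ μ₁ o a)
    (μ : O → A → ℝ)
    (hμ : ∀ o a, μ o a = lam o * μ₁ o a + (1 - lam o) * μ₀ o a)
    (h0 : ∀ o, μ₀ o = π)
    (h1 : ∀ o, 0 < lam o → klDiv (μ₁ o) π ≤ Δmax) :
    ∑ o, ν o * klDiv (μ o) π ≤ Δmax * ∑ o, ν o * lam o := by
  have hμ_mix : ∀ o, μ o = fun a => lam o * μ₁ o a + (1 - lam o) * π a := fun o => by
    funext a; rw [hμ, h0]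
  have hbound : ∀ o, klDiv (μ o) π ≤ lam o * Δmax := fun o => by
    rw [hμ_mix]
    exact klDiv_mix_le_mul (hμ₁0 o) (fun a => (hπ0 a).le) (hlam0 o) (hlam1 o) (h1 o)
  calc ∑ o, ν o * klDiv (μ o) π
      ≤ ∑ o, ν o * (lam o * Δmax) :=
        Finset.sum_le_sum fun o _ => mul_le_mul_of_nonneg_left (hbound o) (hν0 o)
    _ = Δmax * ∑ o, ν o * lam o := by
        rw [Finset.mul_sum]
        exact Finset.sum_congr rfl fun o _ => by ring

/-- **EIG upper bound via relevance (Proposition 4.1, KL form).**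
If the irrelevant-observation posterior `μ₀ o` equals the prior `π`, and for every
observation with positive relevance probability the relevant posterior satisfies
`D(μ₁ o ‖ π) ≤ Δmax`, then the expected KL divergence of the mixture posterior from the
prior is at most `Δmax` times the expected relevance. -/
theorem eig_upper_bound_via_relevance
    {A O : Type*} [Fintype A] [Fintype O] [Nonempty A] [Nonempty O]
    (ν : O → ℝ) (hν0 : ∀ o, 0 ≤ ν o) (hν1 : ∑ o, ν o = 1)
    (π : A → ℝ) (hπ0 : ∀ a, 0 < π a) (hπ1 : ∑ a, π a = 1)
    (Δmax : ℝ) (hΔmax : 0 ≤ Δmax)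
    (lam : O → ℝ) (hlam0 : ∀ o, 0 ≤ lam o) (hlam1 : ∀ o, lam o ≤ 1)
    (μ₀ μ₁ : O → A → ℝ)
    (hμ₀0 : ∀ o a, 0 ≤ μ₀ o a) (hμ₀1 : ∀ o, ∑ a, μ₀ o a = 1)
    (hμ₁0 : ∀ o a, 0 ≤ μ₁ o a) (hμ₁1 : ∀ o, ∑ a, μ₁ o a = 1)
    (μ : O → A → ℝ)
    (hμ : ∀ o a, μ o a = lam o * μ₁ o a + (1 - lam o) * μ₀ o a)
    (h0 : ∀ o, μ₀ o = π)
    (h1 : ∀ o, 0 < lam o → klDiv (μ₁ o) π ≤ Δmax) :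
    ∑ o, ν o * klDiv (μ o) π ≤ Δmax * ∑ o, ν o * lam o :=
  eig_upper_bound_via_relevance_general ν hν0 π hπ0 Δmax lam hlam0 hlam1 μ₀ μ₁ hμ₁0 μ hμ h0 h1
end

section
/- Let A and O be finite nonempty types. Let ν be a probability mass function on O (the distribution of observations), let Δmax ≥ 0, and for each o ∈ O let λ(o) ∈ [0,1] (the relevance probability) and let μ₀(o) and μ₁(o) be probability mass functions on A (the relevance-conditioned posteriors). Define the posterior μ(o) pointwise by μ(o)(a) = λ(o)·μ₁(o)(a) + (1 − λ(o))·μ₀(o)(a), and define the prior π as the ν-mixture of the posteriors: π(a) = ∑_{o} ν(o) · μ(o)(a). Assume π(a) > 0 for all a, and assume: (i) μ₀(o) = π for every o ∈ O; and (ii) D(μ₁(o) ‖ π) ≤ Δmax for every o ∈ O with λ(o) > 0. Then the expected entropy reduction is bounded by the expected relevance: H(π) − ∑_{o} ν(o) · H(μ(o)) ≤ Δmax · ∑_{o} ν(o) · λ(o). -/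
/-!
Bayesian consistency (the prior is the `ν`-average of the posteriors) turns the expected entropy
reduction into the expected divergence `∑ o, ν o * D(μ o ‖ π)`. Each posterior is the mixture
`λ μ₁ + (1 - λ) π`, and convexity of `x ↦ x log x` gives `D(λ P + (1 - λ) Q ‖ Q) ≤ λ D(P ‖ Q)`,
which is at most `λ Δmax`.
-/

open scoped BigOperators

/-- Shannon entropy `H(P) = -∑ x, P x * log (P x)` on a finite type, with the convention
`0 * log 0 = 0` (automatic since `0 * x = 0`). -/
noncomputable def entropy {A : Type*} [Fintype A] (P : A → ℝ) : ℝ :=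
  -∑ a, P a * Real.log (P a)

open Finset

lemma klDiv_eq_sum_mul_log_sub {A : Type*} [Fintype A] (P Q : A → ℝ) (hQ : ∀ a, Q a ≠ 0) :
    klDiv P Q = ∑ a, P a * Real.log (P a) - ∑ a, P a * Real.log (Q a) := by
  rw [klDiv, ← sum_sub_distrib]
  refine sum_congr rfl fun a _ => ?_
  rcases eq_or_ne (P a) 0 with hP | hP
  · simp [hP]
  · rw [Real.log_div hP (hQ a)]
    ring

theorem entropy_sub_sum_entropy_eq_sum_klDiv {A O : Type*} [Fintype A] [Fintype O]
    (ν : O → ℝ) (μ : O → A → ℝ) (π : A → ℝ) (hπ : ∀ a, π a = ∑ o, ν o * μ o a)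
    (hπ0 : ∀ a, π a ≠ 0) :
    entropy π - ∑ o, ν o * entropy (μ o) = ∑ o, ν o * klDiv (μ o) π := by
  have cross_entropy_avg :
      ∑ o, ν o * ∑ a, μ o a * Real.log (π a) = ∑ a, π a * Real.log (π a) := by
    simp_rw [mul_sum, hπ, sum_mul]
    rw [sum_comm]
    exact sum_congr rfl fun _ _ => sum_congr rfl fun _ _ => by ring
  simp_rw [klDiv_eq_sum_mul_log_sub _ _ hπ0, mul_sub, sum_sub_distrib, cross_entropy_avg,
    entropy, mul_neg, sum_neg_distrib]
  ring

lemma mul_log_div_convex_comb_le {t p q : ℝ} (ht0 : 0 ≤ t) (ht1 : t ≤ 1) (hp : 0 ≤ p)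
    (hq : 0 < q) :
    (t * p + (1 - t) * q) * Real.log ((t * p + (1 - t) * q) / q) ≤ t * (p * Real.log (p / q)) := by
  have hconv := Real.convexOn_mul_log.2 (Set.mem_Ici.2 (div_nonneg hp hq.le))
    (Set.mem_Ici.2 zero_le_one) ht0 (sub_nonneg.2 ht1) (add_sub_cancel t 1)
  simp only [smul_eq_mul, Real.log_one, mul_one, mul_zero, add_zero] at hconv
  have hmix : (t * p + (1 - t) * q) / q = t * (p / q) + (1 - t) := by
    field_simp
  calc (t * p + (1 - t) * q) * Real.log ((t * p + (1 - t) * q) / q)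
      = q * ((t * (p / q) + (1 - t)) * Real.log (t * (p / q) + (1 - t))) := by
        rw [← hmix]
        field_simp
    _ ≤ q * (t * (p / q * Real.log (p / q))) := mul_le_mul_of_nonneg_left hconv hq.le
    _ = t * (p * Real.log (p / q)) := by
        field_simp

theorem klDiv_convex_comb_le {A : Type*} [Fintype A] {t : ℝ} (ht0 : 0 ≤ t) (ht1 : t ≤ 1)
    (P Q : A → ℝ) (hP : ∀ a, 0 ≤ P a) (hQ : ∀ a, 0 < Q a) :
    klDiv (fun a => t * P a + (1 - t) * Q a) Q ≤ t * klDiv P Q := by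
  rw [klDiv, klDiv, mul_sum]
  exact sum_le_sum fun a _ => mul_log_div_convex_comb_le ht0 ht1 (hP a) (hQ a)

theorem eig_entropy_upper_bound_via_relevance_general
    {A O : Type*} [Fintype A] [Fintype O]
    (ν : O → ℝ) (hν0 : ∀ o, 0 ≤ ν o)
    (Δmax : ℝ)
    (lam : O → ℝ) (hlam0 : ∀ o, 0 ≤ lam o) (hlam1 : ∀ o, lam o ≤ 1)
    (μ₀ μ₁ : O → A → ℝ)
    (hμ₁0 : ∀ o a, 0 ≤ μ₁ o a)
    (μ : O → A → ℝ)
    (hμ : ∀ o a, μ o a = lam o * μ₁ o a + (1 - lam o) * μ₀ o a)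
    (π : A → ℝ) (hπ : ∀ a, π a = ∑ o, ν o * μ o a)
    (hπpos : ∀ a, 0 < π a)
    (h0 : ∀ o, μ₀ o = π)
    (h1 : ∀ o, 0 < lam o → klDiv (μ₁ o) π ≤ Δmax) :
    entropy π - ∑ o, ν o * entropy (μ o) ≤ Δmax * ∑ o, ν o * lam o := by
  have klDiv_posterior_le (o : O) : klDiv (μ o) π ≤ lam o * Δmax := by
    have hμo : μ o = fun a => lam o * μ₁ o a + (1 - lam o) * π a := by
      ext a
      rw [hμ, h0]
    calc klDiv (μ o) π ≤ lam o * klDiv (μ₁ o) π := by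
          rw [hμo]
          exact klDiv_convex_comb_le (hlam0 o) (hlam1 o) _ _ (hμ₁0 o) hπpos
      _ ≤ lam o * Δmax := by
          rcases (hlam0 o).eq_or_lt with hl | hl
          · simp [← hl]
          · exact mul_le_mul_of_nonneg_left (h1 o hl) hl.le
  calc entropy π - ∑ o, ν o * entropy (μ o) = ∑ o, ν o * klDiv (μ o) π :=
        entropy_sub_sum_entropy_eq_sum_klDiv ν μ π hπ fun a => (hπpos a).ne'
    _ ≤ ∑ o, ν o * (lam o * Δmax) :=
        sum_le_sum fun o _ => mul_le_mul_of_nonneg_left (klDiv_posterior_le o) (hν0 o)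
    _ = Δmax * ∑ o, ν o * lam o := by
        rw [mul_sum]
        exact sum_congr rfl fun _ _ => by ring

/-- **EIG upper bound via relevance (entropy form).** When the prior `π` is the
`ν`-mixture of the posteriors `μ o` (Bayesian consistency), the expected entropy reduction
`H(π) - ∑ o, ν o * H(μ o)` is bounded by `Δmax` times the expected relevance, under the
assumptions that irrelevant observations produce no posterior shift (`μ₀ o = π`) and
relevant observations satisfy `D(μ₁ o ‖ π) ≤ Δmax`. -/
theorem eig_entropy_upper_bound_via_relevance
    {A O : Type*} [Fintype A] [Fintype O] [Nonempty A] [Nonempty O]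
    (ν : O → ℝ) (hν0 : ∀ o, 0 ≤ ν o) (hν1 : ∑ o, ν o = 1)
    (Δmax : ℝ) (hΔmax : 0 ≤ Δmax)
    (lam : O → ℝ) (hlam0 : ∀ o, 0 ≤ lam o) (hlam1 : ∀ o, lam o ≤ 1)
    (μ₀ μ₁ : O → A → ℝ)
    (hμ₀0 : ∀ o a, 0 ≤ μ₀ o a) (hμ₀1 : ∀ o, ∑ a, μ₀ o a = 1)
    (hμ₁0 : ∀ o a, 0 ≤ μ₁ o a) (hμ₁1 : ∀ o, ∑ a, μ₁ o a = 1)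
    (μ : O → A → ℝ)
    (hμ : ∀ o a, μ o a = lam o * μ₁ o a + (1 - lam o) * μ₀ o a)
    (π : A → ℝ) (hπ : ∀ a, π a = ∑ o, ν o * μ o a)
    (hπpos : ∀ a, 0 < π a)
    (h0 : ∀ o, μ₀ o = π)
    (h1 : ∀ o, 0 < lam o → klDiv (μ₁ o) π ≤ Δmax) :
    entropy π - ∑ o, ν o * entropy (μ o) ≤ Δmax * ∑ o, ν o * lam o :=
  eig_entropy_upper_bound_via_relevance_general ν hν0 Δmax lam hlam0 hlam1 μ₀ μ₁ hμ₁0 μ hμ π hπ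
    hπpos h0 h1
end
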